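/- Let ℝⁿ₊ = {x ∈ ℝⁿ : x₁ > 0}. Let h : [0,∞) → ℝ be continuous with h(s) > 0 for every s > 0. Let w : closure(ℝⁿ₊)×ℝ → ℝ be bounded and continuous, once continuously differentiable in t and twice continuously differentiable in x on ℝⁿ₊×ℝ, suppose that (w_t(x,t) − Δw(x,t))·sign(w(x,t)) ≤ −h(|w(x,t)|) for all (x,t) ∈ ℝⁿ₊×ℝ, and suppose w(x,t) = 0 whenever x₁ = 0. Then w ≡ 0. -/

import Mathlib

/-!
Suppose `w x₀ t₀ = a > 0` at an interior point and let `m > 0` be the minimum of `h` on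
`[a, sup w]`. The penalized function `w - ε ‖x - x₀‖² + μ (t - t₀)` attains its maximum on
the compact half-cylinder `(B̄(x₀, R) ∩ {xᵢ ≥ 0}) × [t₀ - T, t₀]`, and with
`ε R² = μ T = sup w` this maximum is at least `a`. Hence it is attained neither where `xᵢ = 0`
(there `w ≤ 0`) nor on the sphere or the bottom, so at the maximum point `w_t ≥ -μ`,
`Δw ≤ 2 n ε` and `w ≥ a`. For `μ` and `2 n ε` small compared with `m` this contradicts
`w_t - Δw ≤ -h(w) ≤ -m`. So `w ≤ 0`, and the same argument applied to `-w` gives `w ≥ 0`.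
-/

open Set Metric

/-- Time derivative `u_t`. -/
noncomputable def pdt {n : ℕ} (u : EuclideanSpace ℝ (Fin n) → ℝ → ℝ)
    (x : EuclideanSpace ℝ (Fin n)) (t : ℝ) : ℝ :=
  deriv (fun s => u x s) t

/-- Laplacian in the space variables: sum of second derivatives along coordinate directions. -/
noncomputable def plap {n : ℕ} (u : EuclideanSpace ℝ (Fin n) → ℝ → ℝ)
    (x : EuclideanSpace ℝ (Fin n)) (t : ℝ) : ℝ :=
  ∑ i : Fin n, iteratedDeriv 2 (fun s : ℝ => u (x + s • EuclideanSpace.single i (1 : ℝ)) t) 0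

/-- `C^{2,1}` regularity on `Ω × I`: twice continuously differentiable in `x`,
once continuously differentiable in `t`. -/
def isC21On {n : ℕ} (u : EuclideanSpace ℝ (Fin n) → ℝ → ℝ)
    (Ω : Set (EuclideanSpace ℝ (Fin n))) (I : Set ℝ) : Prop :=
  (∀ t ∈ I, ContDiffOn ℝ 2 (fun x => u x t) Ω) ∧
  (∀ x ∈ Ω, ContDiffOn ℝ 1 (fun s => u x s) I)

open Filter Topology

theorem IsLocalMax.iteratedDeriv_two_nonpos {f : ℝ → ℝ} {a : ℝ} (h : IsLocalMax f a)
    (hc : ContinuousAt f a) : iteratedDeriv 2 f a ≤ 0 := by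
  rw [iteratedDeriv_succ, iteratedDeriv_one]
  by_contra! hpos
  -- By the second derivative test `a` is also a local minimum, so `f` is locally constant.
  have hconst : f =ᶠ[𝓝 a] fun _ => f a :=
    ((isLocalMin_of_deriv_deriv_pos hpos h.deriv_eq_zero hc).and h).mono
      fun _ hx => le_antisymm hx.2 hx.1
  have hderiv : deriv f =ᶠ[𝓝 a] fun _ => 0 :=
    hconst.eventuallyEq_nhds.mono fun _ hx => by rw [hx.deriv_eq, deriv_const]
  simp [hderiv.deriv_eq] at hpos

theorem IsLocalMaxOn.hasDerivAt_nonneg_of_Iic {f : ℝ → ℝ} {b f' : ℝ}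
    (h : IsLocalMaxOn f (Iic b) b) (hf : HasDerivAt f f' b) : 0 ≤ f' := by
  refine ge_of_tendsto
    ((hasDerivAt_iff_tendsto_slope.mp hf).mono_left (nhdsLT_le_nhdsNE b)) ?_
  filter_upwards [h.filter_mono (nhdsWithin_mono _ Iio_subset_Iic_self), self_mem_nhdsWithin]
    with t hft (ht : t < b)
  rw [slope_def_field]
  exact div_nonneg_of_nonpos (sub_nonpos.mpr hft) (sub_nonpos.mpr ht.le)

theorem iteratedDeriv_two_quadratic (A B C : ℝ) :
    iteratedDeriv 2 (fun s : ℝ => A + B * s + C * s ^ 2) 0 = 2 * C := by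
  have hderiv : deriv (fun s : ℝ => A + B * s + C * s ^ 2) = fun s => B + C * (2 * s) := by
    funext s
    exact ((((hasDerivAt_id s).const_mul B).const_add A).add
      ((hasDerivAt_pow 2 s).const_mul C)).deriv.trans (by simp)
  rw [iteratedDeriv_succ, iteratedDeriv_one, hderiv]
  exact ((((hasDerivAt_id (0 : ℝ)).const_mul 2).const_mul C).const_add B).deriv.trans
    (by simp [mul_comm])

theorem iteratedDeriv_two_comp_add_smul_le_of_isLocalMax {E : Type*} [NormedAddCommGroup E]
    [InnerProductSpace ℝ E] {f : E → ℝ} {x x₀ : E} {ε : ℝ} (hf : ContDiffAt ℝ 2 f x)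
    (hmax : IsLocalMax (fun y => f y - ε * ‖y - x₀‖ ^ 2) x) (v : E) :
    iteratedDeriv 2 (fun s : ℝ => f (x + s • v)) 0 ≤ 2 * ε * ‖v‖ ^ 2 := by
  have hline : ContDiff ℝ 2 (fun s : ℝ => x + s • v) := by fun_prop
  have hfline : ContDiffAt ℝ 2 (fun s : ℝ => f (x + s • v)) 0 :=
    ContDiffAt.comp (f := fun s : ℝ => x + s • v) 0 (by simpa using hf) hline.contDiffAt
  have hpenalty : (fun s : ℝ => ε * ‖x + s • v - x₀‖ ^ 2) =
      fun s => ε * ‖x - x₀‖ ^ 2 + 2 * ε * inner ℝ (x - x₀) v * s + ε * ‖v‖ ^ 2 * s ^ 2 := by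
    funext s
    rw [add_sub_right_comm, norm_add_sq_real, real_inner_smul_right, norm_smul, mul_pow,
      Real.norm_eq_abs, sq_abs]
    ring
  have hmax_line : IsLocalMax (fun s : ℝ => f (x + s • v) - ε * ‖x + s • v - x₀‖ ^ 2) 0 :=
    IsLocalMax.comp_continuous (f := fun y => f y - ε * ‖y - x₀‖ ^ 2)
      (g := fun s : ℝ => x + s • v) (b := 0) (by simpa using hmax)
      hline.continuous.continuousAt
  have key : iteratedDeriv 2
      ((fun s : ℝ => f (x + s • v)) - fun s => ε * ‖x + s • v - x₀‖ ^ 2) 0 ≤ 0 :=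
    hmax_line.iteratedDeriv_two_nonpos (hfline.continuousAt.sub (by fun_prop))
  rwa [iteratedDeriv_sub hfline (by rw [hpenalty]; fun_prop), hpenalty,
    iteratedDeriv_two_quadratic, sub_nonpos, ← mul_assoc] at key

section HalfSpace

variable {n : ℕ}

theorem plap_le_of_isLocalMax {u : EuclideanSpace ℝ (Fin n) → ℝ → ℝ}
    {x x₀ : EuclideanSpace ℝ (Fin n)} {t ε : ℝ} (hu : ContDiffAt ℝ 2 (fun y => u y t) x)
    (hmax : IsLocalMax (fun y => u y t - ε * ‖y - x₀‖ ^ 2) x) :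
    plap u x t ≤ 2 * n * ε :=
  calc plap u x t ≤ ∑ _i : Fin n, 2 * ε := Finset.sum_le_sum fun i _ => by
        simpa using
          iteratedDeriv_two_comp_add_smul_le_of_isLocalMax hu hmax (EuclideanSpace.single i 1)
    _ = 2 * n * ε := by simp; ring

theorem neg_le_pdt_of_isLocalMaxOn {u : EuclideanSpace ℝ (Fin n) → ℝ → ℝ}
    {x : EuclideanSpace ℝ (Fin n)} {t μ : ℝ} (hu : DifferentiableAt ℝ (fun s => u x s) t)
    (hmax : IsLocalMaxOn (fun s => u x s + μ * s) (Iic t) t) :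
    -μ ≤ pdt u x t := by
  have := hmax.hasDerivAt_nonneg_of_Iic (hu.hasDerivAt.add ((hasDerivAt_id t).const_mul μ))
  simp only [mul_one] at this
  unfold pdt
  linarith

theorem pdt_neg (u : EuclideanSpace ℝ (Fin n) → ℝ → ℝ) (x : EuclideanSpace ℝ (Fin n))
    (t : ℝ) : pdt (fun x t => -u x t) x t = -pdt u x t :=
  deriv.neg

theorem plap_neg (u : EuclideanSpace ℝ (Fin n) → ℝ → ℝ) (x : EuclideanSpace ℝ (Fin n))
    (t : ℝ) : plap (fun x t => -u x t) x t = -plap u x t := by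
  simp [plap, iteratedDeriv_fun_neg]

theorem isC21On.neg {u : EuclideanSpace ℝ (Fin n) → ℝ → ℝ} {Ω : Set (EuclideanSpace ℝ (Fin n))}
    {I : Set ℝ} (hu : isC21On u Ω I) : isC21On (fun x t => -u x t) Ω I :=
  ⟨fun t ht => (hu.1 t ht).neg, fun x hx => (hu.2 x hx).neg⟩

variable {i : Fin n} {w : EuclideanSpace ℝ (Fin n) → ℝ → ℝ} {M : ℝ}

theorem exists_penalized_max (hM : ∀ x t, w x t ≤ M)
    (hc : ContinuousOn (fun p : EuclideanSpace ℝ (Fin n) × ℝ => w p.1 p.2)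
      ({x : EuclideanSpace ℝ (Fin n) | 0 ≤ x i} ×ˢ univ))
    (hbc : ∀ x : EuclideanSpace ℝ (Fin n), x i = 0 → ∀ t : ℝ, w x t ≤ 0)
    {x₀ : EuclideanSpace ℝ (Fin n)} (hx₀ : 0 ≤ x₀ i) {t₀ : ℝ} (ha : 0 < w x₀ t₀)
    {ε μ : ℝ} (hε : 0 < ε) (hμ : 0 < μ) :
    ∃ x₁ t₁, 0 < x₁ i ∧ w x₀ t₀ ≤ w x₁ t₁ ∧
      IsLocalMax (fun y => w y t₁ - ε * ‖y - x₀‖ ^ 2) x₁ ∧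
      IsLocalMaxOn (fun t => w x₁ t + μ * t) (Iic t₁) t₁ := by
  have hMpos : 0 < M := ha.trans_le (hM x₀ t₀)
  set R := √(M / ε)
  have hεR : ε * R ^ 2 = M := by rw [Real.sq_sqrt (by positivity)]; field_simp
  set Φ : EuclideanSpace ℝ (Fin n) × ℝ → ℝ :=
    fun p => w p.1 p.2 - ε * ‖p.1 - x₀‖ ^ 2 + μ * (p.2 - t₀)
  set Q := (closedBall x₀ R ∩ {x | 0 ≤ x i}) ×ˢ Icc (t₀ - M / μ) t₀
  have hQ : IsCompact Q :=
    ((isCompact_closedBall x₀ R).inter_right (isClosed_le continuous_const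
      (EuclideanSpace.proj i).continuous)).prod isCompact_Icc
  have hΦ : ContinuousOn Φ Q :=
    ((hc.mono fun p hp => ⟨hp.1.2, trivial⟩).sub (by fun_prop)).add (by fun_prop)
  have h₀Q : (x₀, t₀) ∈ Q :=
    ⟨⟨mem_closedBall_self (by positivity), hx₀⟩, by simp [hμ.le, hMpos.le, div_nonneg]⟩
  obtain ⟨⟨x₁, t₁⟩, ⟨⟨hx₁K, hx₁S⟩, ht₁I⟩, hmax⟩ := hQ.exists_isMaxOn ⟨_, h₀Q⟩ hΦ
  have hΦ₁ : w x₀ t₀ ≤ Φ (x₁, t₁) := by simpa [Φ] using hmax h₀Q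
  simp only [Φ] at hΦ₁
  have hpen_x : 0 ≤ ε * ‖x₁ - x₀‖ ^ 2 := by positivity
  have hpen_t : μ * (t₁ - t₀) ≤ 0 :=
    mul_nonpos_of_nonneg_of_nonpos hμ.le (by linarith [ht₁I.2])
  have hw₁ : w x₀ t₀ ≤ w x₁ t₁ := by linarith
  have hx₁ : 0 < x₁ i := hx₁S.lt_of_ne fun h => by linarith [hbc x₁ h.symm t₁]
  have hx₁R : ‖x₁ - x₀‖ < R := by
    refine (mem_closedBall_iff_norm.mp hx₁K).lt_of_ne fun h => ?_
    rw [h, hεR] at hΦ₁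
    linarith [hM x₁ t₁]
  have ht₁ : t₀ - M / μ < t₁ := by
    refine ht₁I.1.lt_of_ne fun h => ?_
    have : μ * (t₁ - t₀) = -M := by rw [← show t₀ - M / μ = t₁ from h]; field_simp; ring
    linarith [hM x₁ t₁]
  refine ⟨x₁, t₁, hx₁, hw₁, ?_, ?_⟩
  · have hU : ball x₀ R ∩ {x | 0 < x i} ∈ 𝓝 x₁ :=
      (isOpen_ball.inter (isOpen_lt continuous_const (EuclideanSpace.proj i).continuous)).mem_nhds
        ⟨mem_ball_iff_norm.mpr hx₁R, hx₁⟩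
    filter_upwards [hU] with y ⟨hyR, (hyi : 0 < y i)⟩
    have : Φ (y, t₁) ≤ Φ (x₁, t₁) := hmax ⟨⟨ball_subset_closedBall hyR, hyi.le⟩, ht₁I⟩
    linarith
  · filter_upwards [nhdsWithin_le_nhds (Ioi_mem_nhds ht₁), self_mem_nhdsWithin]
      with t ht (ht' : t ≤ t₁)
    have : Φ (x₁, t) ≤ Φ (x₁, t₁) := hmax ⟨⟨hx₁K, hx₁S⟩, le_of_lt ht, ht'.trans ht₁I.2⟩
    linarith

theorem nonpos_of_pdt_sub_plap_le {h : ℝ → ℝ} (hcont : ContinuousOn h (Ioi 0))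
    (hpos : ∀ s : ℝ, 0 < s → 0 < h s) (hM : ∀ x t, w x t ≤ M)
    (hc : ContinuousOn (fun p : EuclideanSpace ℝ (Fin n) × ℝ => w p.1 p.2)
      ({x : EuclideanSpace ℝ (Fin n) | 0 ≤ x i} ×ˢ univ))
    (hreg : isC21On w {x : EuclideanSpace ℝ (Fin n) | 0 < x i} univ)
    (hineq : ∀ x : EuclideanSpace ℝ (Fin n), 0 < x i → ∀ t : ℝ, 0 < w x t →
      pdt w x t - plap w x t ≤ -h (w x t))
    (hbc : ∀ x : EuclideanSpace ℝ (Fin n), x i = 0 → ∀ t : ℝ, w x t ≤ 0)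
    (x : EuclideanSpace ℝ (Fin n)) (hx : 0 < x i) (t : ℝ) : w x t ≤ 0 := by
  by_contra! ha
  obtain ⟨m, hm, hhm⟩ : ∃ m > 0, ∀ s ∈ Icc (w x t) M, m ≤ h s := by
    obtain ⟨s₀, hs₀, hmin⟩ := isCompact_Icc.exists_isMinOn (nonempty_Icc.2 (hM x t))
      (hcont.mono fun s hs => ha.trans_le hs.1)
    exact ⟨h s₀, hpos _ (ha.trans_le hs₀.1), hmin⟩
  set ε := m / (4 * (n + 1))
  obtain ⟨x₁, t₁, hx₁, hw₁, hspace, htime⟩ :=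
    exists_penalized_max hM hc hbc hx.le ha (ε := ε) (μ := m / 4) (by positivity) (by positivity)
  have hΩ : IsOpen {y : EuclideanSpace ℝ (Fin n) | 0 < y i} :=
    isOpen_lt continuous_const (EuclideanSpace.proj i).continuous
  have hΔ : plap w x₁ t₁ ≤ 2 * n * ε :=
    plap_le_of_isLocalMax ((hreg.1 t₁ trivial).contDiffAt (hΩ.mem_nhds hx₁)) hspace
  have ht : -(m / 4) ≤ pdt w x₁ t₁ :=
    neg_le_pdt_of_isLocalMaxOn
      ((contDiffOn_univ.1 (hreg.2 x₁ hx₁)).differentiable one_ne_zero t₁) htime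
  have hε : 2 * n * ε < m / 2 := by
    rw [mul_div_assoc', div_lt_div_iff₀ (by positivity) (by positivity)]
    nlinarith
  linarith [hineq x₁ hx₁ t₁ (ha.trans_le hw₁), hhm _ ⟨hw₁, hM x₁ t₁⟩]

end HalfSpace

/-- Proposition `propF`, half-space case with Dirichlet boundary condition: a bounded function,
continuous on the closed half-space, `C^{2,1}` in the open half-space, satisfying
`(w_t - Δw) · sign w ≤ -h(|w|)` there and vanishing on the boundary, must vanish identically. -/
theorem liouville_sign_inequality_halfspace
    (n : ℕ) (hn : 0 < n) (h : ℝ → ℝ)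
    (hcont : ContinuousOn h (Ici 0)) (hpos : ∀ s : ℝ, 0 < s → 0 < h s)
    (w : EuclideanSpace ℝ (Fin n) → ℝ → ℝ)
    (hbdd : ∃ M : ℝ, ∀ x t, |w x t| ≤ M)
    (hc : ContinuousOn (fun p : EuclideanSpace ℝ (Fin n) × ℝ => w p.1 p.2)
      ({x : EuclideanSpace ℝ (Fin n) | 0 ≤ x ⟨0, hn⟩} ×ˢ univ))
    (hreg : isC21On w {x : EuclideanSpace ℝ (Fin n) | 0 < x ⟨0, hn⟩} univ)
    (hineq : ∀ x : EuclideanSpace ℝ (Fin n), 0 < x ⟨0, hn⟩ → ∀ t : ℝ,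
      (pdt w x t - plap w x t) * Real.sign (w x t) ≤ - h |w x t|)
    (hbc : ∀ x : EuclideanSpace ℝ (Fin n), x ⟨0, hn⟩ = 0 → ∀ t : ℝ, w x t = 0) :
    ∀ x : EuclideanSpace ℝ (Fin n), 0 ≤ x ⟨0, hn⟩ → ∀ t : ℝ, w x t = 0 := by
  obtain ⟨M, hM⟩ := hbdd
  have hcont_pos := hcont.mono Ioi_subset_Ici_self
  have hw_nonpos := nonpos_of_pdt_sub_plap_le hcont_pos hpos
    (fun x t => (le_abs_self _).trans (hM x t)) hc hreg
    (fun x hx t hwx => by simpa [Real.sign_of_pos hwx, abs_of_pos hwx] using hineq x hx t)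
    (fun x hx t => (hbc x hx t).le)
  have hw_nonneg := nonpos_of_pdt_sub_plap_le hcont_pos hpos
    (fun x t => (neg_le_abs _).trans (hM x t)) hc.neg hreg.neg
    (fun x hx t hnwx => by
      have hwx : w x t < 0 := neg_pos.mp hnwx
      have := hineq x hx t
      rw [Real.sign_of_neg hwx, abs_of_neg hwx] at this
      rw [pdt_neg, plap_neg]
      linarith)
    (fun x hx t => (neg_eq_zero.mpr (hbc x hx t)).le)
  intro x hx t
  rcases hx.eq_or_lt with hx0 | hx0
  · exact hbc x hx0.symm t
  · exact le_antisymm (hw_nonpos x hx0 t) (neg_nonpos.mp (hw_nonneg x hx0 t))
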